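/- arXiv:1502.05648 — 2 statements merged into one kernel-verified Lean document; each statement's English description precedes it below -/
import Mathlib

section
/- Let p' ≥ 1 and p ≥ p'. Let (Ω, F, P) be a probability space and let Ψ : Ω → C_{p'}(Λ) be such that for every (t,x) ∈ Λ the map ω ↦ Ψ(ω)(t,x) is measurable and such that ess sup_{ω∈Ω} |Ψ(ω)|_{C_{p'}(Λ)} < ∞. Then the map [0,T] × L^p(Ω; 𝕎) → ℝ, (s, Y) ↦ E[ Ψ(·)(s, Y(·)) ], is well defined (the integrand is integrable) and jointly continuous, where L^p(Ω; 𝕎) is the Bochner space of p-integrable 𝕎-valued random variables with norm ‖Y‖ = (E[|Y|_∞^p])^{1/p}. In particular, if s_n → s in [0,T] and Y_n → Y in L^p(Ω; 𝕎), then E[Ψ(·)(s_n, Y_n)] → E[Ψ(·)(s, Y)]. -/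
open MeasureTheory

/-- The stopped path `x_{·∧t}` of a continuous path `x : [0,T] → H`. -/
noncomputable def stopPath {H : Type*} [TopologicalSpace H] (T : ℝ)
    (t : Set.Icc (0:ℝ) T) (x : C(Set.Icc (0:ℝ) T, H)) : C(Set.Icc (0:ℝ) T, H) :=
  x.comp ⟨fun s => ⟨min s.1 t.1, le_min s.2.1 t.2.1, min_le_of_left_le s.2.2⟩,
    Continuous.subtype_mk (continuous_subtype_val.min continuous_const) _⟩

/-- The pseudometric `d_∞` on `Λ = [0,T] × C([0,T];H)`. -/
noncomputable def dInfty {H : Type*} [NormedAddCommGroup H] (T : ℝ)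
    (p q : Set.Icc (0:ℝ) T × C(Set.Icc (0:ℝ) T, H)) : ℝ :=
  |p.1.1 - q.1.1| + ‖stopPath T p.1 p.2 - stopPath T q.1 q.2‖

/-- The topology on `Λ` induced by the pseudometric `d_∞` (generated by the `d_∞`-balls). -/
noncomputable def lambdaTop {H : Type*} [NormedAddCommGroup H] (T : ℝ) :
    TopologicalSpace (Set.Icc (0:ℝ) T × C(Set.Icc (0:ℝ) T, H)) :=
  TopologicalSpace.generateFrom
    {B | ∃ p ε, B = {q | dInfty (H := H) T p q < ε}}

/-!
The `d_∞`-topology on `Λ` is finer than the product topology, so every `Ψ ω` is jointly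
continuous on `Λ`; with measurability in `ω` this makes `ω ↦ Ψ ω (s, Y ω)` measurable, and the
growth bound makes it integrable. Given `(sₙ, Yₙ) → (s, Y)`, every subsequence has a further
subsequence along which `Yₙ → Y` almost surely, hence `Ψ(sₙ, Yₙ) → Ψ(s, Y)` almost surely. Since
`Yₙ → Y` in `L^{p'}`, the family `|Yₙ|^{p'}` is uniformly integrable, and so is `Ψ(sₙ, Yₙ)`, which
it dominates up to constants. Vitali's convergence theorem then gives convergence in `L¹`, in
particular of the expectations.
-/

open Filter Topology
open scoped ENNReal

namespace MeasureTheory.UnifIntegrable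

variable {α ι β γ : Type*} {m : MeasurableSpace α} {μ : Measure α}
  [NormedAddCommGroup β] [NormedAddCommGroup γ]

theorem of_le_mul {f : ι → α → β} {g : ι → α → γ} {p : ℝ≥0∞} (hf : UnifIntegrable f p μ)
    (c : ℝ) (hgf : ∀ i, ∀ᵐ x ∂μ, ‖g i x‖ ≤ c * ‖f i x‖) : UnifIntegrable g p μ := by
  intro ε hε
  obtain ⟨δ, hδ, hfδ⟩ := hf (show 0 < ε / (|c| + 1) by positivity)
  refine ⟨δ, hδ, fun i s hs hμs => ?_⟩
  have hind : ∀ᵐ x ∂μ, ‖s.indicator (g i) x‖ ≤ |c| * ‖s.indicator (f i) x‖ := by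
    filter_upwards [hgf i] with x hx
    by_cases hxs : x ∈ s
    · simpa [hxs] using hx.trans (mul_le_mul_of_nonneg_right (le_abs_self c) (norm_nonneg _))
    · simp [hxs]
  calc eLpNorm (s.indicator (g i)) p μ
      ≤ ENNReal.ofReal |c| * eLpNorm (s.indicator (f i)) p μ :=
        eLpNorm_le_mul_eLpNorm_of_ae_le_mul hind p
    _ ≤ ENNReal.ofReal |c| * ENNReal.ofReal (ε / (|c| + 1)) := by gcongr; exact hfδ i s hs hμs
    _ = ENNReal.ofReal (|c| * (ε / (|c| + 1))) := (ENNReal.ofReal_mul (abs_nonneg c)).symm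
    _ ≤ ENNReal.ofReal ε := by
        gcongr
        rw [mul_div_assoc', div_le_iff₀ (by positivity)]
        nlinarith [abs_nonneg c]

theorem norm_rpow {f : ι → α → β} {q : ℝ} (hq : 0 < q)
    (hf : UnifIntegrable f (ENNReal.ofReal q) μ) :
    UnifIntegrable (fun i x => ‖f i x‖ ^ q) 1 μ := by
  intro ε hε
  obtain ⟨δ, hδ, hfδ⟩ := hf (Real.rpow_pos_of_pos hε q⁻¹)
  refine ⟨δ, hδ, fun i s hs hμs => ?_⟩
  have hind : s.indicator (fun x => ‖f i x‖ ^ q) = fun x => ‖s.indicator (f i) x‖ ^ q := by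
    ext x
    by_cases hxs : x ∈ s
    · simp [hxs]
    · simp [hxs, Real.zero_rpow hq.ne']
  calc eLpNorm (s.indicator fun x => ‖f i x‖ ^ q) 1 μ
      = eLpNorm (s.indicator (f i)) (ENNReal.ofReal q) μ ^ q := by
        rw [hind, eLpNorm_norm_rpow _ hq, one_mul]
    _ ≤ ENNReal.ofReal (ε ^ q⁻¹) ^ q := by gcongr; exact hfδ i s hs hμs
    _ = ENNReal.ofReal ε := by
        rw [ENNReal.ofReal_rpow_of_nonneg (by positivity) hq.le,
          Real.rpow_inv_rpow hε.le hq.ne']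

end MeasureTheory.UnifIntegrable

namespace MeasureTheory.Lp

variable {α E : Type*} {m : MeasurableSpace α} {μ : Measure α} [NormedAddCommGroup E]
  {p : ℝ≥0∞} [Fact (1 ≤ p)]

theorem exists_seq_tendsto_ae {f : ℕ → Lp E p μ} {g : Lp E p μ} (hfg : Tendsto f atTop (𝓝 g)) :
    ∃ φ : ℕ → ℕ, StrictMono φ ∧ ∀ᵐ x ∂μ, Tendsto (fun n => f (φ n) x) atTop (𝓝 (g x)) :=
  (tendstoInMeasure_of_tendsto_eLpNorm (one_pos.trans_le Fact.out).ne'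
    (fun n => Lp.aestronglyMeasurable (f n)) (Lp.aestronglyMeasurable g)
    ((tendsto_Lp_iff_tendsto_eLpNorm' f g).1 hfg)).exists_seq_tendsto_ae

theorem tendsto_eLpNorm_sub_of_exponent_le [IsProbabilityMeasure μ] {ι : Type*} {l : Filter ι}
    {q : ℝ≥0∞} (hqp : q ≤ p) {f : ι → Lp E p μ} {g : Lp E p μ} (hfg : Tendsto f l (𝓝 g)) :
    Tendsto (fun n => eLpNorm (⇑(f n) - ⇑g) q μ) l (𝓝 0) :=
  tendsto_of_tendsto_of_tendsto_of_le_of_le tendsto_const_nhds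
    ((tendsto_Lp_iff_tendsto_eLpNorm' f g).1 hfg) (fun _ => zero_le) fun n =>
      eLpNorm_le_eLpNorm_of_exponent_le hqp
        ((Lp.aestronglyMeasurable (f n)).sub (Lp.aestronglyMeasurable g))

end MeasureTheory.Lp

noncomputable def stopTime (T : ℝ) (t : Set.Icc (0:ℝ) T) : C(Set.Icc (0:ℝ) T, Set.Icc (0:ℝ) T) :=
  ⟨fun s => ⟨min s.1 t.1, le_min s.2.1 t.2.1, min_le_of_left_le s.2.2⟩,
    Continuous.subtype_mk (continuous_subtype_val.min continuous_const) _⟩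

theorem lipschitzWith_stopTime (T : ℝ) : LipschitzWith 1 (stopTime T) := by
  refine LipschitzWith.of_dist_le_mul fun t t' => ?_
  rw [NNReal.coe_one, one_mul]
  refine (ContinuousMap.dist_le dist_nonneg).2 fun s => ?_
  rw [Subtype.dist_eq, Subtype.dist_eq, Real.dist_eq, Real.dist_eq]
  exact (abs_min_sub_min_le_max (s : ℝ) t s t').trans (by simp)

section PathSpace

variable {H : Type*} [NormedAddCommGroup H] {T : ℝ}

local notation "Λ" => Set.Icc (0:ℝ) T × C(Set.Icc (0:ℝ) T, H)

theorem continuous_stopPath : Continuous fun q : Λ => stopPath T q.1 q.2 :=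
  ContinuousMap.continuous_comp'.comp
    (((lipschitzWith_stopTime T).continuous.comp continuous_fst).prodMk continuous_snd)

theorem instTopologicalSpaceProd_le_lambdaTop :
    (inferInstance : TopologicalSpace Λ) ≤ lambdaTop (H := H) T := by
  refine le_generateFrom ?_
  rintro B ⟨q, ε, rfl⟩
  refine isOpen_lt ?_ continuous_const
  exact (continuous_const.sub (continuous_subtype_val.comp continuous_fst)).abs.add
    (continuous_const.sub continuous_stopPath).norm

theorem Continuous.of_lambdaTop {Y : Type*} [TopologicalSpace Y] {f : Λ → Y}
    (hf : @Continuous _ _ (lambdaTop T) _ f) : Continuous f :=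
  continuous_le_dom instTopologicalSpaceProd_le_lambdaTop hf

end PathSpace

section CaratheodoryIntegrand

variable {Ω : Type*} [MeasurableSpace Ω] {P : Measure Ω}

theorem aestronglyMeasurable_comp_of_continuous {X : Type*} [TopologicalSpace X]
    [TopologicalSpace.MetrizableSpace X] [SecondCountableTopology X] [MeasurableSpace X] [OpensMeasurableSpace X]
    {Ψ : Ω → X → ℝ} (hΨcont : ∀ ω, Continuous (Ψ ω)) (hΨmeas : ∀ x, Measurable fun ω => Ψ ω x)
    {ξ : Ω → X} (hξ : AEMeasurable ξ P) :
    AEStronglyMeasurable (fun ω => Ψ ω (ξ ω)) P := by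
  have hΨ : StronglyMeasurable (Function.uncurry fun (x : X) (ω : Ω) => Ψ ω x) :=
    stronglyMeasurable_uncurry_of_continuous_of_stronglyMeasurable hΨcont
      fun x => (hΨmeas x).stronglyMeasurable
  exact (hΨ.measurable.comp_aemeasurable (hξ.prodMk aemeasurable_id)).aestronglyMeasurable

variable {S E : Type*} [TopologicalSpace S] [TopologicalSpace.MetrizableSpace S] [SecondCountableTopology S]
  [MeasurableSpace S] [BorelSpace S] [NormedAddCommGroup E] [SecondCountableTopology E]
  [IsProbabilityMeasure P]

theorem integrable_comp_prodMk {p' : ℝ} (hp' : 0 < p') {Ψ : Ω → S × E → ℝ}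
    (hΨcont : ∀ ω, Continuous (Ψ ω)) (hΨmeas : ∀ q, Measurable fun ω => Ψ ω q) {C : ℝ}
    (hΨbdd : ∀ᵐ ω ∂P, ∀ q : S × E, |Ψ ω q| ≤ C * (1 + ‖q.2‖ ^ p')) (s : S)
    {Y : Ω → E} (hY : MemLp Y (ENNReal.ofReal p') P) :
    Integrable (fun ω => Ψ ω (s, Y ω)) P := by
  borelize E
  have hYp' : Integrable (fun ω => ‖Y ω‖ ^ p') P := by
    simpa [ENNReal.toReal_ofReal hp'.le] using
      hY.integrable_norm_rpow (by simpa using hp') ENNReal.ofReal_ne_top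
  refine (((integrable_const 1).add hYp').const_mul C).mono'
    (aestronglyMeasurable_comp_of_continuous hΨcont hΨmeas
      (aemeasurable_const.prodMk hY.1.aemeasurable)) ?_
  filter_upwards [hΨbdd] with ω hω
  exact hω (s, Y ω)

theorem tendsto_integral_comp_prodMk {p' : ℝ} (hp' : 1 ≤ p') {Ψ : Ω → S × E → ℝ}
    (hΨcont : ∀ ω, Continuous (Ψ ω)) (hΨmeas : ∀ q, Measurable fun ω => Ψ ω q) {C : ℝ}
    (hΨbdd : ∀ᵐ ω ∂P, ∀ q : S × E, |Ψ ω q| ≤ C * (1 + ‖q.2‖ ^ p'))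
    {t : ℕ → S} {s : S} (ht : Tendsto t atTop (𝓝 s)) {Z : ℕ → Ω → E} {Y : Ω → E}
    (hZ : ∀ n, MemLp (Z n) (ENNReal.ofReal p') P) (hY : MemLp Y (ENNReal.ofReal p') P)
    (hZY : Tendsto (fun n => eLpNorm (Z n - Y) (ENNReal.ofReal p') P) atTop (𝓝 0))
    (hZY_ae : ∀ᵐ ω ∂P, Tendsto (fun n => Z n ω) atTop (𝓝 (Y ω))) :
    Tendsto (fun n => ∫ ω, Ψ ω (t n, Z n ω) ∂P) atTop (𝓝 (∫ ω, Ψ ω (s, Y ω) ∂P)) := by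
  borelize E
  have hp'_pos : 0 < p' := one_pos.trans_le hp'
  have hp'_one : 1 ≤ ENNReal.ofReal p' := by simpa using hp'
  have hmeas (n : ℕ) : AEStronglyMeasurable (fun ω => Ψ ω (t n, Z n ω)) P :=
    aestronglyMeasurable_comp_of_continuous hΨcont hΨmeas
      (aemeasurable_const.prodMk (hZ n).1.aemeasurable)
  have hbound_ui : UnifIntegrable ((fun _ _ => (1:ℝ)) + fun n ω => ‖Z n ω‖ ^ p') 1 P :=
    (unifIntegrable_const le_rfl ENNReal.one_ne_top (memLp_const 1)).add
      ((unifIntegrable_of_tendsto_Lp hp'_one ENNReal.ofReal_ne_top hZ hY hZY).norm_rpow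
        hp'_pos) le_rfl (fun _ => aestronglyMeasurable_const)
      (fun n => ((hZ n).1.norm.aemeasurable.pow_const p').aestronglyMeasurable)
  have hui : UnifIntegrable (fun n ω => Ψ ω (t n, Z n ω)) 1 P := by
    refine hbound_ui.of_le_mul C fun n => ?_
    filter_upwards [hΨbdd] with ω hω
    have h1 : (0:ℝ) ≤ 1 + ‖Z n ω‖ ^ p' := by positivity
    simpa only [Pi.add_apply, Real.norm_eq_abs, abs_of_nonneg h1] using hω (t n, Z n ω)
  have hlim : ∀ᵐ ω ∂P, Tendsto (fun n => Ψ ω (t n, Z n ω)) atTop (𝓝 (Ψ ω (s, Y ω))) := by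
    filter_upwards [hZY_ae] with ω hω
    exact ((hΨcont ω).tendsto _).comp (ht.prodMk_nhds hω)
  have hint : Integrable (fun ω => Ψ ω (s, Y ω)) P :=
    integrable_comp_prodMk hp'_pos hΨcont hΨmeas hΨbdd s hY
  refine tendsto_integral_of_L1' _ hint.1
    (Eventually.of_forall fun n => integrable_comp_prodMk hp'_pos hΨcont hΨmeas hΨbdd (t n) (hZ n))
    ?_
  exact tendsto_Lp_finite_of_tendsto_ae le_rfl ENNReal.one_ne_top hmeas
    (memLp_one_iff_integrable.2 hint) hui hlim

end CaratheodoryIntegrand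

theorem stmt7_general {H : Type*} [NormedAddCommGroup H]
    [TopologicalSpace.SeparableSpace H]
    {Ω : Type*} [MeasurableSpace Ω] (P : Measure Ω) [IsProbabilityMeasure P]
    (T : ℝ) (p' p : ℝ) (hp' : 1 ≤ p') (hp : p' ≤ p)
    [Fact ((1:ENNReal) ≤ ENNReal.ofReal p)]
    (Ψ : Ω → (Set.Icc (0:ℝ) T × C(Set.Icc (0:ℝ) T, H)) → ℝ)
    (hΨcont : ∀ ω, @Continuous _ _ (lambdaTop T) _ (Ψ ω))
    (hΨmeas : ∀ q : Set.Icc (0:ℝ) T × C(Set.Icc (0:ℝ) T, H),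
      Measurable fun ω => Ψ ω q)
    (C : ℝ)
    (hΨbdd : ∀ᵐ ω ∂P, ∀ q : Set.Icc (0:ℝ) T × C(Set.Icc (0:ℝ) T, H),
      |Ψ ω q| ≤ C * (1 + ‖q.2‖ ^ p')) :
    (∀ (s : Set.Icc (0:ℝ) T)
        (Y : Lp (C(Set.Icc (0:ℝ) T, H)) (ENNReal.ofReal p) P),
      Integrable (fun ω => Ψ ω (s, Y ω)) P) ∧
    Continuous (fun sY : Set.Icc (0:ℝ) T ×
        Lp (C(Set.Icc (0:ℝ) T, H)) (ENNReal.ofReal p) P =>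
      ∫ ω, Ψ ω (sY.1, sY.2 ω) ∂P) := by
  have : SecondCountableTopology H := UniformSpace.secondCountable_of_separable H
  have hΨcont' (ω : Ω) : Continuous (Ψ ω) := (hΨcont ω).of_lambdaTop
  have hpp' : ENNReal.ofReal p' ≤ ENNReal.ofReal p := ENNReal.ofReal_le_ofReal hp
  have hmemLp (Y : Lp (C(Set.Icc (0:ℝ) T, H)) (ENNReal.ofReal p) P) :
      MemLp Y (ENNReal.ofReal p') P :=
    (Lp.memLp Y).mono_exponent hpp'
  refine ⟨fun s Y => integrable_comp_prodMk (one_pos.trans_le hp') hΨcont' hΨmeas hΨbdd s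
    (hmemLp Y), ?_⟩
  rw [continuous_iff_seqContinuous]
  rintro u ⟨s, Y⟩ hu
  refine tendsto_of_subseq_tendsto fun ns hns => ?_
  have hu' := hu.comp hns
  obtain ⟨φ, hφ, hae⟩ := Lp.exists_seq_tendsto_ae ((continuous_snd.tendsto _).comp hu')
  have hu'' := hu'.comp hφ.tendsto_atTop
  exact ⟨φ, tendsto_integral_comp_prodMk hp' hΨcont' hΨmeas hΨbdd
    ((continuous_fst.tendsto _).comp hu'') (fun n => hmemLp _) (hmemLp Y)
    (Lp.tendsto_eLpNorm_sub_of_exponent_le hpp' ((continuous_snd.tendsto _).comp hu'')) hae⟩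

/-- If `Ψ : Ω → C_{p'}(Λ)` is pointwise measurable in `ω`, with essentially bounded
`C_{p'}(Λ)`-norm, and `p ≥ p' ≥ 1`, then the map
`[0,T] × L^p(Ω;𝕎) → ℝ, (s,Y) ↦ E[Ψ(·)(s,Y(·))]` is well defined and jointly continuous. -/
theorem stmt7 {H : Type*} [NormedAddCommGroup H] [InnerProductSpace ℝ H]
    [CompleteSpace H] [TopologicalSpace.SeparableSpace H]
    {Ω : Type*} [MeasurableSpace Ω] (P : Measure Ω) [IsProbabilityMeasure P]
    (T : ℝ) (hT : 0 ≤ T) (p' p : ℝ) (hp' : 1 ≤ p') (hp : p' ≤ p)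
    [Fact ((1:ENNReal) ≤ ENNReal.ofReal p)]
    (Ψ : Ω → (Set.Icc (0:ℝ) T × C(Set.Icc (0:ℝ) T, H)) → ℝ)
    (hΨcont : ∀ ω, @Continuous _ _ (lambdaTop T) _ (Ψ ω))
    (hΨmeas : ∀ q : Set.Icc (0:ℝ) T × C(Set.Icc (0:ℝ) T, H),
      Measurable fun ω => Ψ ω q)
    (C : ℝ)
    (hΨbdd : ∀ᵐ ω ∂P, ∀ q : Set.Icc (0:ℝ) T × C(Set.Icc (0:ℝ) T, H),
      |Ψ ω q| ≤ C * (1 + ‖q.2‖ ^ p')) :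
    (∀ (s : Set.Icc (0:ℝ) T)
        (Y : Lp (C(Set.Icc (0:ℝ) T, H)) (ENNReal.ofReal p) P),
      Integrable (fun ω => Ψ ω (s, Y ω)) P) ∧
    Continuous (fun sY : Set.Icc (0:ℝ) T ×
        Lp (C(Set.Icc (0:ℝ) T, H)) (ENNReal.ofReal p) P =>
      ∫ ω, Ψ ω (sY.1, sY.2 ω) ∂P) :=
  stmt7_general P T p' p hp' hp Ψ hΨcont hΨmeas C hΨbdd
end

section
/- Let p ≥ 1 and let (Ω, F, P) be a probability space. Let {u_n}_{n∈ℕ} be a sequence in C_p(Λ) with sup_n |u_n|_{C_p(Λ)} < ∞ and let u ∈ C_p(Λ) be such that, for each s ∈ [0,T], u_n(s,·) → u(s,·) uniformly on compact subsets of 𝕎. Let X_n, X : Ω → 𝕎 be strongly measurable with E[|X_n|_∞^p] < ∞, E[|X|_∞^p] < ∞, and X_n → X in L^p(Ω; 𝕎). Then, for every s ∈ [0,T], E[u_n(s, X_n)] → E[u(s, X)] as n → ∞. -/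
open MeasureTheory Filter

open Topology

/-!
Pass to a subsequence along which `∑ₙ E‖Xₙ - X‖^p < ∞`. Along it, `S := ∑ₙ ‖Xₙ - X‖^p` is
integrable, so `Xₙ → X` almost surely and `|uₙ(s, Xₙ)| ≤ |C| (1 + 2^(p-1) (‖X‖^p + S))` is an
integrable bound. For a fixed `ω`, the points `Xₙ(ω)` together with their limit form a compact
set, on which `uₙ(s, ·) → u(s, ·)` uniformly (so `u(s, ·)` is continuous there), hence
`uₙ(s, Xₙ(ω)) → u(s, X(ω))`. Dominated convergence gives the claim along the subsequence, and
therefore along the whole sequence.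
-/

theorem rpow_le_two_rpow_mul_of_le_add {p a b c : ℝ} (hp : 1 ≤ p) (ha : 0 ≤ a) (hb : 0 ≤ b)
    (hc : 0 ≤ c) (habc : a ≤ b + c) : a ^ p ≤ 2 ^ (p - 1) * (b ^ p + c ^ p) := by
  have h := NNReal.rpow_add_le_mul_rpow_add_rpow ⟨b, hb⟩ ⟨c, hc⟩ hp
  calc a ^ p ≤ (b + c) ^ p := Real.rpow_le_rpow ha habc (by linarith)
    _ ≤ 2 ^ (p - 1) * (b ^ p + c ^ p) := by exact_mod_cast h

theorem tendsto_zero_of_tendsto_rpow_zero {ι : Type*} {l : Filter ι} {f : ι → ℝ} {p : ℝ}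
    (hp : 0 < p) (hf : ∀ i, 0 ≤ f i) (h : Tendsto (fun i => f i ^ p) l (𝓝 0)) :
    Tendsto f l (𝓝 0) := by
  have := (Real.continuousAt_rpow_const 0 p⁻¹ (Or.inr (inv_nonneg.2 hp.le))).tendsto.comp h
  simpa [Function.comp_def, Real.rpow_rpow_inv (hf _) hp.ne', Real.zero_rpow (inv_ne_zero hp.ne')]
    using this

theorem tendsto_comp_of_tendstoUniformlyOn_isCompact {α β : Type*} [TopologicalSpace α]
    [UniformSpace β] {F : ℕ → α → β} {f : α → β} {x : ℕ → α} {a : α}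
    (hF : ∀ n, Continuous (F n)) (hconv : ∀ K, IsCompact K → TendstoUniformlyOn F f atTop K)
    (hx : Tendsto x atTop (𝓝 a)) : Tendsto (fun n => F n (x n)) atTop (𝓝 (f a)) := by
  have hK : IsCompact (insert a (Set.range x)) := hx.isCompact_insert_range
  have hf : ContinuousOn f (insert a (Set.range x)) :=
    (hconv _ hK).continuousOn (Frequently.of_forall fun n => (hF n).continuousOn)
  exact (hconv _ hK).tendsto_comp (hf a (Set.mem_insert a _)) <| tendsto_nhdsWithin_iff.2
    ⟨hx, Eventually.of_forall fun n => Set.mem_insert_of_mem _ ⟨n, rfl⟩⟩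

theorem continuous_section_of_continuous_lambdaTop {H Y : Type*} [NormedAddCommGroup H]
    [TopologicalSpace Y] {T : ℝ} {v : Set.Icc (0:ℝ) T × C(Set.Icc (0:ℝ) T, H) → Y}
    (hv : @Continuous _ _ (lambdaTop T) _ v) (s : Set.Icc (0:ℝ) T) :
    Continuous fun x => v (s, x) := by
  have hmk : @Continuous _ _ _ (lambdaTop T) fun x : C(Set.Icc (0:ℝ) T, H) => (s, x) := by
    rw [lambdaTop, continuous_generateFrom_iff]
    rintro _ ⟨q, ε, rfl⟩
    have hstop : Continuous (stopPath (H := H) T s) := ContinuousMap.continuous_precomp _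
    have hdist : Continuous fun x => dInfty T q (s, x) := by
      dsimp only [dInfty]
      fun_prop
    exact isOpen_Iio.preimage hdist
  exact @Continuous.comp _ _ _ _ (lambdaTop T) _ _ _ hv hmk

section Integrals

variable {Ω : Type*} [MeasurableSpace Ω] {μ : Measure Ω}

theorem exists_integrable_bound_and_ae_tendsto_zero_of_summable_integral {g : ℕ → Ω → ℝ}
    (hg_nonneg : ∀ k ω, 0 ≤ g k ω) (hg_int : ∀ k, Integrable (g k) μ)
    (hsum : Summable fun k => ∫ ω, g k ω ∂μ) :
    ∃ S : Ω → ℝ, Integrable S μ ∧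
      ∀ᵐ ω ∂μ, (∀ k, g k ω ≤ S ω) ∧ Tendsto (fun k => g k ω) atTop (𝓝 0) := by
  set G : ℕ → Ω → ENNReal := fun k ω => ENNReal.ofReal (g k ω)
  have hG_meas : ∀ k, AEMeasurable (G k) μ := fun k => (hg_int k).aemeasurable.ennreal_ofReal
  have hG_lint : ∀ k, ∫⁻ ω, G k ω ∂μ = ENNReal.ofReal (∫ ω, g k ω ∂μ) := fun k =>
    (ofReal_integral_eq_lintegral_ofReal (hg_int k) (ae_of_all _ (hg_nonneg k))).symm
  have hG_sum : ∫⁻ ω, ∑' k, G k ω ∂μ ≠ ⊤ := by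
    rw [lintegral_tsum hG_meas, funext hG_lint,
      ← ENNReal.ofReal_tsum_of_nonneg (fun k => integral_nonneg (hg_nonneg k)) hsum]
    exact ENNReal.ofReal_ne_top
  refine ⟨fun ω => (∑' k, G k ω).toReal,
    integrable_toReal_of_lintegral_ne_top (AEMeasurable.tsum hG_meas) hG_sum, ?_⟩
  filter_upwards [ae_lt_top' (AEMeasurable.tsum hG_meas) hG_sum] with ω hω
  have hG_toReal : ∀ k, (G k ω).toReal = g k ω := fun k => ENNReal.toReal_ofReal (hg_nonneg k ω)
  refine ⟨fun k => ?_, ?_⟩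
  · rw [← hG_toReal k]
    exact ENNReal.toReal_mono hω.ne (ENNReal.le_tsum k)
  · have := (ENNReal.tendsto_toReal ENNReal.zero_ne_top).comp
      (ENNReal.tendsto_atTop_zero_of_tsum_ne_top hω.ne)
    simpa [Function.comp_def, hG_toReal] using this

variable {E : Type*} [NormedAddCommGroup E]

theorem integrable_norm_sub_rpow {p : ℝ} (hp : 1 ≤ p) {X Y : Ω → E}
    (hX : AEStronglyMeasurable X μ) (hY : AEStronglyMeasurable Y μ)
    (hXint : Integrable (fun ω => ‖X ω‖ ^ p) μ) (hYint : Integrable (fun ω => ‖Y ω‖ ^ p) μ) :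
    Integrable (fun ω => ‖X ω - Y ω‖ ^ p) μ := by
  refine ((hXint.add hYint).const_mul (2 ^ (p - 1))).mono'
    ((hX.sub hY).norm.aemeasurable.pow_const p).aestronglyMeasurable (ae_of_all _ fun ω => ?_)
  rw [Real.norm_of_nonneg (by positivity)]
  exact rpow_le_two_rpow_mul_of_le_add hp (norm_nonneg _) (norm_nonneg _) (norm_nonneg _)
    (norm_sub_le _ _)

variable [IsFiniteMeasure μ] {F : ℕ → E → ℝ} {f : E → ℝ} {p C : ℝ}

theorem tendsto_integral_comp_of_summable_integral_norm_sub_rpow (hp : 1 ≤ p)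
    (hF : ∀ n, Continuous (F n)) (hconv : ∀ K, IsCompact K → TendstoUniformlyOn F f atTop K)
    (hbound : ∀ n x, |F n x| ≤ C * (1 + ‖x‖ ^ p)) {X : ℕ → Ω → E} {Y : Ω → E}
    (hX : ∀ n, AEStronglyMeasurable (X n) μ) (hYint : Integrable (fun ω => ‖Y ω‖ ^ p) μ)
    (hdiff_int : ∀ n, Integrable (fun ω => ‖X n ω - Y ω‖ ^ p) μ)
    (hsum : Summable fun n => ∫ ω, ‖X n ω - Y ω‖ ^ p ∂μ) :
    Tendsto (fun n => ∫ ω, F n (X n ω) ∂μ) atTop (𝓝 (∫ ω, f (Y ω) ∂μ)) := by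
  obtain ⟨S, hS_int, hS⟩ :=
    exists_integrable_bound_and_ae_tendsto_zero_of_summable_integral
      (fun _ _ => by positivity) hdiff_int hsum
  refine tendsto_integral_of_dominated_convergence
    (fun ω => |C| * (1 + 2 ^ (p - 1) * (‖Y ω‖ ^ p + S ω)))
    (fun n => (hF n).comp_aestronglyMeasurable (hX n))
    (((integrable_const 1).add ((hYint.add hS_int).const_mul _)).const_mul _)
    (fun n => ?_) ?_
  · filter_upwards [hS] with ω hω
    have hXn : ‖X n ω‖ ^ p ≤ 2 ^ (p - 1) * (‖Y ω‖ ^ p + S ω) := calc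
      ‖X n ω‖ ^ p ≤ 2 ^ (p - 1) * (‖Y ω‖ ^ p + ‖X n ω - Y ω‖ ^ p) :=
        rpow_le_two_rpow_mul_of_le_add hp (norm_nonneg _) (norm_nonneg _) (norm_nonneg _)
          (norm_le_norm_add_norm_sub' _ _)
      _ ≤ 2 ^ (p - 1) * (‖Y ω‖ ^ p + S ω) := by gcongr; exact hω.1 n
    calc ‖F n (X n ω)‖ ≤ C * (1 + ‖X n ω‖ ^ p) := hbound n _
      _ ≤ |C| * (1 + ‖X n ω‖ ^ p) := by gcongr; exact le_abs_self C
      _ ≤ |C| * (1 + 2 ^ (p - 1) * (‖Y ω‖ ^ p + S ω)) := by gcongr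
  · filter_upwards [hS] with ω hω
    refine tendsto_comp_of_tendstoUniformlyOn_isCompact hF hconv ?_
    exact tendsto_iff_norm_sub_tendsto_zero.2 <| tendsto_zero_of_tendsto_rpow_zero
      (by linarith) (fun n => norm_nonneg _) hω.2

theorem tendsto_integral_comp_of_tendsto_integral_norm_sub_rpow (hp : 1 ≤ p)
    (hF : ∀ n, Continuous (F n)) (hconv : ∀ K, IsCompact K → TendstoUniformlyOn F f atTop K)
    (hbound : ∀ n x, |F n x| ≤ C * (1 + ‖x‖ ^ p)) {X : ℕ → Ω → E} {Y : Ω → E}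
    (hX : ∀ n, AEStronglyMeasurable (X n) μ) (hY : AEStronglyMeasurable Y μ)
    (hXint : ∀ n, Integrable (fun ω => ‖X n ω‖ ^ p) μ)
    (hYint : Integrable (fun ω => ‖Y ω‖ ^ p) μ)
    (hlim : Tendsto (fun n => ∫ ω, ‖X n ω - Y ω‖ ^ p ∂μ) atTop (𝓝 0)) :
    Tendsto (fun n => ∫ ω, F n (X n ω) ∂μ) atTop (𝓝 (∫ ω, f (Y ω) ∂μ)) := by
  have hdiff_int n := integrable_norm_sub_rpow hp (hX n) hY (hXint n) hYint
  refine tendsto_of_subseq_tendsto fun ns hns => ?_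
  obtain ⟨ms, hms_mono, hms⟩ := extraction_forall_of_eventually fun k =>
    (hlim.comp hns).eventually (eventually_le_nhds (pow_pos one_half_pos k))
  refine ⟨ms, tendsto_integral_comp_of_summable_integral_norm_sub_rpow hp (fun _ => hF _)
    (fun K hK => (hconv K hK).seq_tendstoUniformlyOn _ (hns.comp hms_mono.tendsto_atTop))
    (fun _ => hbound _) (fun _ => hX _) hYint (fun _ => hdiff_int _) ?_⟩
  exact summable_geometric_two.of_nonneg_of_le
    (fun k => integral_nonneg fun ω => by positivity) hms

end Integrals

theorem stmt12_general {H : Type*} [NormedAddCommGroup H]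
    {Ω : Type*} [MeasurableSpace Ω] (P : Measure Ω) [IsProbabilityMeasure P]
    (T : ℝ) (p : ℝ) (hp : 1 ≤ p)
    (u : ℕ → (Set.Icc (0:ℝ) T × C(Set.Icc (0:ℝ) T, H)) → ℝ)
    (ulim : (Set.Icc (0:ℝ) T × C(Set.Icc (0:ℝ) T, H)) → ℝ)
    (hucont : ∀ n, @Continuous _ _ (lambdaTop T) _ (u n))
    (C : ℝ) (hub : ∀ n, ∀ q : Set.Icc (0:ℝ) T × C(Set.Icc (0:ℝ) T, H),
      |u n q| ≤ C * (1 + ‖q.2‖ ^ p))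
    (hconv : ∀ (s : Set.Icc (0:ℝ) T) (K : Set C(Set.Icc (0:ℝ) T, H)), IsCompact K →
      TendstoUniformlyOn (fun n x => u n (s, x)) (fun x => ulim (s, x)) atTop K)
    (X : ℕ → Ω → C(Set.Icc (0:ℝ) T, H)) (Xlim : Ω → C(Set.Icc (0:ℝ) T, H))
    (hXm : ∀ n, StronglyMeasurable (X n)) (hXlimm : StronglyMeasurable Xlim)
    (hXint : ∀ n, Integrable (fun ω => ‖X n ω‖ ^ p) P)
    (hXlimint : Integrable (fun ω => ‖Xlim ω‖ ^ p) P)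
    (hXconv : Tendsto (fun n => ∫ ω, ‖X n ω - Xlim ω‖ ^ p ∂P) atTop (nhds 0)) :
    ∀ s : Set.Icc (0:ℝ) T,
      Tendsto (fun n => ∫ ω, u n (s, X n ω) ∂P) atTop
        (nhds (∫ ω, ulim (s, Xlim ω) ∂P)) := by
  intro s
  exact tendsto_integral_comp_of_tendsto_integral_norm_sub_rpow hp
    (fun n => continuous_section_of_continuous_lambdaTop (hucont n) s) (hconv s)
    (fun n x => hub n (s, x)) (fun n => (hXm n).aestronglyMeasurable)
    hXlimm.aestronglyMeasurable hXint hXlimint hXconv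

/-- Stability of expectations: if `u_n ∈ C_p(Λ)` with `sup_n |u_n|_{C_p} < ∞`,
`u_n(s,·) → u(s,·)` uniformly on compact subsets of `𝕎`, and `X_n → X` in `L^p(Ω;𝕎)`,
then `E[u_n(s, X_n)] → E[u(s, X)]` for every `s ∈ [0,T]`. -/
theorem stmt12 {H : Type*} [NormedAddCommGroup H] [InnerProductSpace ℝ H]
    [CompleteSpace H] [TopologicalSpace.SeparableSpace H]
    {Ω : Type*} [MeasurableSpace Ω] (P : Measure Ω) [IsProbabilityMeasure P]
    (T : ℝ) (hT : 0 ≤ T) (p : ℝ) (hp : 1 ≤ p)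
    (u : ℕ → (Set.Icc (0:ℝ) T × C(Set.Icc (0:ℝ) T, H)) → ℝ)
    (ulim : (Set.Icc (0:ℝ) T × C(Set.Icc (0:ℝ) T, H)) → ℝ)
    (hucont : ∀ n, @Continuous _ _ (lambdaTop T) _ (u n))
    (hulimcont : @Continuous _ _ (lambdaTop T) _ ulim)
    (C : ℝ) (hub : ∀ n, ∀ q : Set.Icc (0:ℝ) T × C(Set.Icc (0:ℝ) T, H),
      |u n q| ≤ C * (1 + ‖q.2‖ ^ p))
    (Cl : ℝ) (hulimb : ∀ q : Set.Icc (0:ℝ) T × C(Set.Icc (0:ℝ) T, H),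
      |ulim q| ≤ Cl * (1 + ‖q.2‖ ^ p))
    (hconv : ∀ (s : Set.Icc (0:ℝ) T) (K : Set C(Set.Icc (0:ℝ) T, H)), IsCompact K →
      TendstoUniformlyOn (fun n x => u n (s, x)) (fun x => ulim (s, x)) atTop K)
    (X : ℕ → Ω → C(Set.Icc (0:ℝ) T, H)) (Xlim : Ω → C(Set.Icc (0:ℝ) T, H))
    (hXm : ∀ n, StronglyMeasurable (X n)) (hXlimm : StronglyMeasurable Xlim)
    (hXint : ∀ n, Integrable (fun ω => ‖X n ω‖ ^ p) P)
    (hXlimint : Integrable (fun ω => ‖Xlim ω‖ ^ p) P)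
    (hXconv : Tendsto (fun n => ∫ ω, ‖X n ω - Xlim ω‖ ^ p ∂P) atTop (nhds 0)) :
    ∀ s : Set.Icc (0:ℝ) T,
      Tendsto (fun n => ∫ ω, u n (s, X n ω) ∂P) atTop
        (nhds (∫ ω, ulim (s, Xlim ω) ∂P)) :=
  stmt12_general P T p hp u ulim hucont C hub hconv X Xlim hXm hXlimm hXint hXlimint hXconv
end
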